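/- There exists a constant C ≥ 1, depending only on f and ξ₀ (not on α), such that for every α ∈ (0, ξ₀] and every 0 ≤ n ≤ N(α): C^{−1}·|(f^n)'(c₁)|·α ≤ |I_{n+1}| ≤ C·|(f^n)'(c₁)|·α. -/

import Mathlib

open Set MeasureTheory Filter
open scoped ENNReal

noncomputable section

/-- The quadratic map `f(x) = a - x²`. -/
def qm (a : ℝ) : ℝ → ℝ := fun x => a - x ^ 2

/-- The critical point `0` of `qm a` is strictly pre-periodic: its forward orbit never
returns to `0` and is eventually periodic. -/
def StrictlyPreperiodic (a : ℝ) : Prop :=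
  (∀ i : ℕ, 1 ≤ i → (qm a)^[i] 0 ≠ 0) ∧
    ∃ m p : ℕ, 1 ≤ m ∧ 1 ≤ p ∧ (qm a)^[m + p] 0 = (qm a)^[m] 0

/-- A lift of the Viana skew product `F(θ, x) = (dθ, f(x) + αφ(θ))` to `ℝ × ℝ`;
for `φ` of period `1` this is a lift of the corresponding map of `(ℝ/ℤ) × ℝ`. -/
def Viana (a : ℝ) (d : ℕ) (φ : ℝ → ℝ) (α : ℝ) : ℝ × ℝ → ℝ × ℝ :=
  fun p => ((d : ℝ) * p.1, qm a p.2 + α * φ p.1)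

/-- The fibre maps `f_n`, defined by `F^n(θ, x) = (d^n θ, f_n(θ, x))`. -/
def fn (a : ℝ) (d : ℕ) (φ : ℝ → ℝ) (α : ℝ) (n : ℕ) (θ x : ℝ) : ℝ :=
  ((Viana a d φ α)^[n] (θ, x)).2

/-- Endpoints of the shadowing intervals: `IEnd a α n` gives the endpoints of `I_{n+1}`, where
`I₁ = [c₁ - 2α, c₁ + 2α]` and `I_{n+1}` is the closed interval containing `f(I_n)` both of whose
complementary components in `I_{n+1}` have length `α`. -/
def IEnd (a α : ℝ) : ℕ → ℝ × ℝ
  | 0 => (qm a 0 - 2 * α, qm a 0 + 2 * α)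
  | n + 1 =>
      (sInf (qm a '' Set.Icc (IEnd a α n).1 (IEnd a α n).2) - α,
        sSup (qm a '' Set.Icc (IEnd a α n).1 (IEnd a α n).2) + α)

/-- The shadowing interval `I_n`, for `n ≥ 1`. -/
def Iseq (a α : ℝ) (n : ℕ) : Set ℝ := Set.Icc (IEnd a α (n - 1)).1 (IEnd a α (n - 1)).2

/-- The length `|I_{n+1}|` of the shadowing interval `I_{n+1}`. -/
def len (a α : ℝ) (n : ℕ) : ℝ := (IEnd a α n).2 - (IEnd a α n).1

/-- `N(α)`: the maximal integer `N` such that `|I_n| < ξ₀` for all `1 ≤ n ≤ N` and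
`∑_{n=1}^{N} |I_n| ≤ ξ₀`. -/
def Nal (a ξ₀ α : ℝ) : ℕ :=
  sSup {N : ℕ | (∀ n : ℕ, 1 ≤ n → n ≤ N → len a α (n - 1) < ξ₀) ∧
    ∑ n ∈ Finset.range N, len a α n ≤ ξ₀}

/-!
Up to time `N(α)` the intervals `I_{n+1} = [s, t]` stay at distance at least `ξ₀` from the
critical point, are shorter than `ξ₀` and have total length at most `ξ₀`. On such an interval
`f` stretches lengths by `|s + t| = 2|c_{n+1}| (1 ± |I_{n+1}| / (4ξ₀))`, so the ratio
`r_n = |I_{n+1}| / (|(f^n)'(c₁)| α)` satisfies `r_{n+1} = r_n (1 ± ε_n) + 2 / |(f^{n+1})'(c₁)|`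
with `∑ ε_n ≤ 1/4`. Hence `3 ≤ r_n ≤ (4 + 2 ∑_k 1 / |(f^{k+1})'(c₁)|) e^{1/4}`, and the sum is
bounded because the critical orbit falls onto a repelling cycle, so `|(f^n)'(c₁)|` grows
geometrically.

The cycle is repelling by Singer's argument applied to `g = f^{2p}`, which has negative
Schwarzian derivative, so that `g'` has no positive local minimum. If a fixed point `q` had
`0 < g'(q) ≤ 1`, it would attract from some side. The maximal trap interval `(q, V)` on that side
contains no critical point of `g` (its orbit would reach the cycle, which consists of fixed points
of `g`), so the mean value theorem on `[q, V]` yields `ζ` with `g'(ζ) = 1` and `g' > 0` on `[q, ζ]`.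
By the minimum principle `g' ≥ 1` on `[q, ζ]` when `g'(q) = 1`, contradicting `g(ζ) < ζ`; when
`g'(q) < 1` both sides attract and the two points `ζ` contradict the minimum principle directly.
-/

open scoped ContDiff Topology
open Function (IsPeriodicPt)

lemma min_le_of_forall_not_isLocalMin {h : ℝ → ℝ} {s t : ℝ} (hst : s ≤ t)
    (hc : ContinuousOn h (Icc s t)) (hloc : ∀ x ∈ Ioo s t, ¬IsLocalMin h x) :
    ∀ x ∈ Icc s t, min (h s) (h t) ≤ h x := by
  obtain ⟨x₀, hx₀, hmin⟩ := isCompact_Icc.exists_isMinOn (nonempty_Icc.mpr hst) hc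
  intro x hx
  refine le_trans ?_ (hmin hx)
  rcases eq_or_lt_of_le hx₀.1 with rfl | hs
  · exact min_le_left _ _
  rcases eq_or_lt_of_le hx₀.2 with rfl | ht
  · exact min_le_right _ _
  exact absurd (hmin.isLocalMin (Icc_mem_nhds hs ht)) (hloc x₀ ⟨hs, ht⟩)

def schwarzian (u : ℝ → ℝ) (x : ℝ) : ℝ :=
  deriv (deriv (deriv u)) x / deriv u x - 3 / 2 * (deriv (deriv u) x / deriv u x) ^ 2

def HasNegSchwarzian (g : ℝ → ℝ) : Prop :=
  ∀ x, deriv g x ≠ 0 → schwarzian g x < 0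

section NegativeSchwarzian

variable {g : ℝ → ℝ}

lemma deriv_deriv_deriv_neg_of_schwarzian_neg {x : ℝ} (hS : schwarzian g x < 0)
    (hpos : 0 < deriv g x) (h₂ : deriv (deriv g) x = 0) : deriv (deriv (deriv g)) x < 0 := by
  rw [schwarzian, h₂, zero_div, zero_pow two_ne_zero, mul_zero, sub_zero] at hS
  simpa only [zero_mul] using (div_lt_iff₀ hpos).mp hS

lemma not_isLocalMin_deriv (hg : ContDiff ℝ ∞ g) (hS : HasNegSchwarzian g)
    {x : ℝ} (hpos : 0 < deriv g x) : ¬IsLocalMin (deriv g) x := by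
  intro hmin
  have h₂ : deriv (deriv g) x = 0 := hmin.deriv_eq_zero
  have h₃ := deriv_deriv_deriv_neg_of_schwarzian_neg (hS x hpos.ne') hpos h₂
  have hmax : IsLocalMax (deriv g) x :=
    isLocalMax_of_deriv_deriv_neg h₃ h₂ (hg.continuous_deriv (by simp)).continuousAt
  have hconst : deriv g =ᶠ[𝓝 x] fun _ => deriv g x :=
    (hmin.and hmax).mono fun y hy => le_antisymm hy.2 hy.1
  have : deriv (deriv (deriv g)) x = 0 := by
    rw [hconst.deriv.deriv_eq]
    simp
  linarith

lemma min_le_deriv (hg : ContDiff ℝ ∞ g) (hS : HasNegSchwarzian g)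
    {s t : ℝ} (hst : s ≤ t) (hpos : ∀ x ∈ Icc s t, 0 < deriv g x) :
    ∀ x ∈ Icc s t, min (deriv g s) (deriv g t) ≤ deriv g x :=
  min_le_of_forall_not_isLocalMin hst (hg.continuous_deriv (by simp)).continuousOn
    fun x hx => not_isLocalMin_deriv hg hS (hpos x (Ioo_subset_Icc_self hx))

lemma sub_le_sub_of_deriv_eq_one (hg : ContDiff ℝ ∞ g)
    (hS : HasNegSchwarzian g) {s t : ℝ} (hst : s ≤ t)
    (hpos : ∀ x ∈ Icc s t, 0 < deriv g x) (hs : deriv g s = 1) (ht : deriv g t = 1) :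
    t - s ≤ g t - g s := by
  have hg₁ : Differentiable ℝ g := hg.differentiable (by simp)
  have := (convex_Icc s t).mul_sub_le_image_sub_of_le_deriv hg₁.continuous.continuousOn
    hg₁.differentiableOn (C := 1) (fun x hx => ?_) s (left_mem_Icc.mpr hst) t
    (right_mem_Icc.mpr hst) hst
  · linarith
  · simpa [hs, ht] using min_le_deriv hg hS hst hpos x (interior_subset hx)

end NegativeSchwarzian

section Attraction

variable {g h : ℝ → ℝ} {q c : ℝ}

def AttractsFromRight (g : ℝ → ℝ) (q : ℝ) : Prop :=
  ∀ᶠ x in 𝓝[>] q, q < g x ∧ g x < x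

def AttractsFromLeft (g : ℝ → ℝ) (q : ℝ) : Prop :=
  ∀ᶠ x in 𝓝[<] q, x < g x ∧ g x < q

lemma eventually_nhdsGT_sub_lt (hh : Differentiable ℝ h) (hd : ∀ᶠ x in 𝓝[>] q, deriv h x < c) :
    ∀ᶠ x in 𝓝[>] q, h x - h q < c * (x - q) := by
  obtain ⟨u, hu, hsub⟩ := mem_nhdsGT_iff_exists_Ioo_subset.mp hd
  filter_upwards [Ioo_mem_nhdsGT hu] with x hx
  refine (convex_Ico q u).image_sub_lt_mul_sub_of_deriv_lt hh.continuous.continuousOn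
    hh.differentiableOn (fun y hy => hsub ?_) q (left_mem_Ico.mpr hu) x ⟨hx.1.le, hx.2⟩ hx.1
  rwa [interior_Ico] at hy

lemma eventually_nhdsLT_sub_lt (hh : Differentiable ℝ h) (hd : ∀ᶠ x in 𝓝[<] q, deriv h x < c) :
    ∀ᶠ x in 𝓝[<] q, h q - h x < c * (q - x) := by
  obtain ⟨l, hl, hsub⟩ := mem_nhdsLT_iff_exists_Ioo_subset.mp hd
  filter_upwards [Ioo_mem_nhdsLT hl] with x hx
  refine (convex_Ioc l q).image_sub_lt_mul_sub_of_deriv_lt hh.continuous.continuousOn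
    hh.differentiableOn (fun y hy => hsub ?_) x ⟨hx.1, hx.2.le⟩ q (right_mem_Ioc.mpr hl) hx.2
  rwa [interior_Ioc] at hy

lemma eventually_nhdsGT_pos_of_deriv_pos (hd : 0 < deriv h q) (h₀ : h q = 0) :
    ∀ᶠ x in 𝓝[>] q, 0 < h x := by
  filter_upwards [nhdsWithin_le_nhds (eventually_nhdsWithin_sign_eq_of_deriv_pos hd h₀),
    self_mem_nhdsWithin] with x hx (hqx : q < x)
  rwa [sign_pos (sub_pos.mpr hqx), sign_eq_one_iff] at hx

lemma eventually_nhdsLT_neg_of_deriv_pos (hd : 0 < deriv h q) (h₀ : h q = 0) :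
    ∀ᶠ x in 𝓝[<] q, h x < 0 := by
  filter_upwards [nhdsWithin_le_nhds (eventually_nhdsWithin_sign_eq_of_deriv_pos hd h₀),
    self_mem_nhdsWithin] with x hx (hxq : x < q)
  rwa [sign_neg (sub_neg.mpr hxq), sign_eq_neg_one_iff] at hx

lemma eventually_nhdsGT_neg_of_deriv_neg (hd : deriv h q < 0) (h₀ : h q = 0) :
    ∀ᶠ x in 𝓝[>] q, h x < 0 := by
  simpa using eventually_nhdsGT_pos_of_deriv_pos (h := fun x => -h x)
    (by simpa [deriv.fun_neg] using hd) (by simpa using h₀)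

lemma attractsFromRight_of_eventually_deriv_lt_one (hg : Differentiable ℝ g) (hq : g q = q)
    (hq' : 0 < deriv g q) (hd : ∀ᶠ x in 𝓝[>] q, deriv g x < 1) : AttractsFromRight g q := by
  filter_upwards [eventually_nhdsGT_pos_of_deriv_pos (h := fun x => g x - q)
      (by simpa using hq') (by simp [hq]), eventually_nhdsGT_sub_lt hg hd] with x h₁ h₂
  constructor <;> linarith

lemma attractsFromLeft_of_eventually_deriv_lt_one (hg : Differentiable ℝ g) (hq : g q = q)
    (hq' : 0 < deriv g q) (hd : ∀ᶠ x in 𝓝[<] q, deriv g x < 1) : AttractsFromLeft g q := by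
  filter_upwards [eventually_nhdsLT_neg_of_deriv_pos (h := fun x => g x - q)
      (by simpa using hq') (by simp [hq]), eventually_nhdsLT_sub_lt hg hd] with x h₁ h₂
  constructor <;> linarith

lemma attractsFromRight_or_attractsFromLeft (hg : ContDiff ℝ ∞ g)
    (hS : HasNegSchwarzian g) (hq : g q = q) (hq₁ : deriv g q = 1) :
    AttractsFromRight g q ∨ AttractsFromLeft g q := by
  have hg₁ : Differentiable ℝ g := hg.differentiable (by simp)
  have hg₂ : Differentiable ℝ (deriv g) := (hg.iterate_deriv 1).differentiable (by simp)
  have hφ : deriv (fun x => deriv g x - 1) q = deriv (deriv g) q := deriv_sub_const ..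
  have hφ₀ : deriv g q - 1 = 0 := by rw [hq₁, sub_self]
  rcases lt_trichotomy (deriv (deriv g) q) 0 with h₂ | h₂ | h₂
  · refine .inl (attractsFromRight_of_eventually_deriv_lt_one hg₁ hq (by simp [hq₁]) ?_)
    simpa using eventually_nhdsGT_neg_of_deriv_neg (h := fun x => deriv g x - 1) (hφ ▸ h₂) hφ₀
  · refine .inl (attractsFromRight_of_eventually_deriv_lt_one hg₁ hq (by simp [hq₁]) ?_)
    have h₃ := deriv_deriv_deriv_neg_of_schwarzian_neg (hS q (by simp [hq₁])) (by simp [hq₁]) h₂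
    filter_upwards [eventually_nhdsGT_sub_lt hg₂ (c := 0)
      (eventually_nhdsGT_neg_of_deriv_neg h₃ h₂)] with x hx
    linarith
  · refine .inr (attractsFromLeft_of_eventually_deriv_lt_one hg₁ hq (by simp [hq₁]) ?_)
    simpa using eventually_nhdsLT_neg_of_deriv_pos (h := fun x => deriv g x - 1) (hφ ▸ h₂) hφ₀

lemma exists_maximal_trap_of_attractsFromRight (hg : Continuous g) (hattr : AttractsFromRight g q)
    {z : ℝ} (hqz : q < z) (hz : ¬(q < g z ∧ g z < z)) :
    ∃ V, q < V ∧ (∀ x ∈ Ioo q V, q < g x ∧ g x < x) ∧ (g V = q ∨ g V = V) := by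
  set B := {x | q < x ∧ ¬(q < g x ∧ g x < x)}
  have hB : B.Nonempty := ⟨z, hqz, hz⟩
  have hBb : BddBelow B := ⟨q, fun x hx => hx.1.le⟩
  obtain ⟨u, hu, hsub⟩ := mem_nhdsGT_iff_exists_Ioo_subset.mp hattr
  have hqV : q < sInf B :=
    lt_of_lt_of_le hu (le_csInf hB fun x hx => not_lt.mp fun hxu => hx.2 (hsub ⟨hx.1, hxu⟩))
  have htrap : ∀ x ∈ Ioo q (sInf B), q < g x ∧ g x < x := fun x hx =>
    by_contra fun h => (csInf_le hBb ⟨hx.1, h⟩).not_gt hx.2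
  refine ⟨sInf B, hqV, htrap, ?_⟩
  have hle : q ≤ g (sInf B) ∧ g (sInf B) ≤ sInf B := by
    have hcl : IsClosed {x | q ≤ g x ∧ g x ≤ x} :=
      (isClosed_le continuous_const hg).inter (isClosed_le hg continuous_id)
    refine (hcl.closure_subset_iff (s := Ioo q (sInf B))).mpr (fun x hx => ?_) ?_
    · exact ⟨(htrap x hx).1.le, (htrap x hx).2.le⟩
    · rw [closure_Ioo hqV.ne]
      exact right_mem_Icc.mpr hqV.le
  have hbad : g (sInf B) ≤ q ∨ sInf B ≤ g (sInf B) := by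
    have hcl : IsClosed {x | g x ≤ q ∨ x ≤ g x} :=
      (isClosed_le hg continuous_const).union (isClosed_le continuous_id hg)
    refine hcl.closure_subset_iff.mpr (fun x hx => ?_) (csInf_mem_closure hB hBb)
    show g x ≤ q ∨ x ≤ g x
    simpa only [not_and_or, not_lt] using hx.2
  rcases hbad with h | h
  · exact .inl (le_antisymm h hle.1)
  · exact .inr (le_antisymm hle.2 h)

lemma exists_deriv_eq_one_of_attractsFromRight (hg : Differentiable ℝ g) (hq : g q = q)
    (hq' : 0 < deriv g q) (hattr : AttractsFromRight g q) {z : ℝ} (hqz : q < z)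
    (hz : ¬(q < g z ∧ g z < z))
    (hcrit : ∀ S : Set ℝ, MapsTo g S S → (∀ x ∈ S, g x ≠ x) → ∀ x ∈ S, deriv g x ≠ 0) :
    ∃ ζ, q < ζ ∧ g ζ < ζ ∧ deriv g ζ = 1 ∧ ∀ x ∈ Icc q ζ, 0 < deriv g x := by
  obtain ⟨V, hqV, htrap, hV⟩ := exists_maximal_trap_of_attractsFromRight hg.continuous hattr hqz hz
  have hnc : ∀ x ∈ Ioo q V, deriv g x ≠ 0 :=
    hcrit _ (fun x hx => ⟨(htrap x hx).1, (htrap x hx).2.trans hx.2⟩) fun x hx => (htrap x hx).2.ne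
  obtain ⟨ζ, hζ, hζd⟩ := exists_deriv_eq_slope g hqV hg.continuous.continuousOn hg.differentiableOn
  -- `g V = q` would make `ζ` a critical point inside the trap.
  have hgV : g V = V := hV.resolve_left fun h => hnc ζ hζ (by rw [hζd, h, hq, sub_self, zero_div])
  refine ⟨ζ, hζ.1, (htrap ζ hζ).2, by rw [hζd, hgV, hq, div_self (sub_ne_zero.mpr hqV.ne')], ?_⟩
  refine ((hasDerivWithinAt_forall_lt_or_forall_gt_of_forall_ne (convex_Icc q ζ)
    (fun x _ => (hg x).hasDerivAt.hasDerivWithinAt) (m := 0) fun x hx => ?_).resolve_left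
    fun h => (h q (left_mem_Icc.mpr hζ.1.le)).not_gt hq')
  rcases hx.1.eq_or_lt with rfl | hqx
  · exact hq'.ne'
  · exact hnc x ⟨hqx, hx.2.trans_lt hζ.2⟩

lemma exists_deriv_eq_one_of_attractsFromLeft (hg : Differentiable ℝ g) (hq : g q = q)
    (hq' : 0 < deriv g q) (hattr : AttractsFromLeft g q) {z : ℝ} (hzq : z < q)
    (hz : ¬(z < g z ∧ g z < q))
    (hcrit : ∀ S : Set ℝ, MapsTo g S S → (∀ x ∈ S, g x ≠ x) → ∀ x ∈ S, deriv g x ≠ 0) :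
    ∃ ζ, ζ < q ∧ ζ < g ζ ∧ deriv g ζ = 1 ∧ ∀ x ∈ Icc ζ q, 0 < deriv g x := by
  set g' : ℝ → ℝ := fun x => -g (-x)
  have hd : ∀ x, deriv g' x = deriv g (-x) := fun x => by
    simp only [g', deriv.fun_neg, deriv_comp_neg, neg_neg]
  have hattr' : AttractsFromRight g' (-q) :=
    (tendsto_neg_nhdsGT_neg.eventually hattr).mono fun x hx => ⟨by simp [g', hx.2], by
      simp only [g']; linarith [hx.1]⟩
  have hg' : Differentiable ℝ g' := by simp only [g']; fun_prop
  have hcrit' : ∀ S : Set ℝ, MapsTo g' S S → (∀ x ∈ S, g' x ≠ x) → ∀ x ∈ S, deriv g' x ≠ 0 := by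
    intro S hS hfix x hx
    rw [hd]
    refine hcrit (-S) (fun y hy => ?_) (fun y hy hgy => hfix _ hy ?_) (-x) (by simpa using hx)
    · simpa [g'] using hS hy
    · simp [g', hgy]
  obtain ⟨ζ, hqζ, hgζ, hζ₁, hpos⟩ := exists_deriv_eq_one_of_attractsFromRight hg'
    (by simp [g', hq]) (by rwa [hd, neg_neg]) hattr' (z := -z) (by linarith)
    (fun h => hz ⟨by simp only [g', neg_neg] at h; linarith [h.2],
      by simp only [g', neg_neg] at h; linarith [h.1]⟩) hcrit'
  refine ⟨-ζ, by linarith, by simp only [g'] at hgζ; linarith, by rwa [← hd], fun x hx => ?_⟩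
  simpa [hd] using hpos (-x) ⟨by linarith [hx.2], by linarith [hx.1]⟩

end Attraction

theorem one_lt_deriv_of_isFixedPt {g : ℝ → ℝ} (hg : ContDiff ℝ ∞ g)
    (hS : HasNegSchwarzian g)
    (hcrit : ∀ S : Set ℝ, MapsTo g S S → (∀ x ∈ S, g x ≠ x) → ∀ x ∈ S, deriv g x ≠ 0)
    {q z₁ z₂ : ℝ} (hq : g q = q) (hq' : 0 < deriv g q) (hz₁ : z₁ < q) (hgz₁ : g z₁ ≤ z₁)
    (hz₂ : q < z₂) (hgz₂ : g z₂ ≤ q) : 1 < deriv g q := by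
  have hg₁ : Differentiable ℝ g := hg.differentiable (by simp)
  have hright := fun hattr => exists_deriv_eq_one_of_attractsFromRight hg₁ hq hq' hattr hz₂
    (fun h => (h.1.trans_le hgz₂).false) hcrit
  have hleft := fun hattr => exists_deriv_eq_one_of_attractsFromLeft hg₁ hq hq' hattr hz₁
    (fun h => (h.1.trans_le hgz₁).false) hcrit
  by_contra hle
  rcases (not_lt.mp hle).lt_or_eq with hlt | heq
  · have hd : ∀ᶠ x in 𝓝 q, deriv g x < 1 :=
      (hg.continuous_deriv (by simp)).continuousAt.eventually_lt continuousAt_const hlt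
    obtain ⟨ζ₂, hqζ₂, -, hζ₂, hpos₂⟩ := hright
      (attractsFromRight_of_eventually_deriv_lt_one hg₁ hq hq' (nhdsWithin_le_nhds hd))
    obtain ⟨ζ₁, hζ₁q, -, hζ₁, hpos₁⟩ := hleft
      (attractsFromLeft_of_eventually_deriv_lt_one hg₁ hq hq' (nhdsWithin_le_nhds hd))
    have hpos : ∀ x ∈ Icc ζ₁ ζ₂, 0 < deriv g x := fun x hx =>
      (le_total x q).elim (fun h => hpos₁ x ⟨hx.1, h⟩) fun h => hpos₂ x ⟨h, hx.2⟩
    have := min_le_deriv hg hS (hζ₁q.trans hqζ₂).le hpos q ⟨hζ₁q.le, hqζ₂.le⟩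
    rw [hζ₁, hζ₂, min_self] at this
    linarith
  · rcases attractsFromRight_or_attractsFromLeft hg hS hq heq with hattr | hattr
    · obtain ⟨ζ, hqζ, hgζ, hζ, hpos⟩ := hright hattr
      linarith [sub_le_sub_of_deriv_eq_one hg hS hqζ.le hpos heq hζ]
    · obtain ⟨ζ, hζq, hgζ, hζ, hpos⟩ := hleft hattr
      linarith [sub_le_sub_of_deriv_eq_one hg hS hζq.le hpos hζ heq]

lemma exists_forall_sum_inv_le {u : ℕ → ℝ} {n₀ p : ℕ} {Λ : ℝ} (hu : ∀ k, 0 < u k) (hΛ : 1 < Λ)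
    (hp : 0 < p) (hgrowth : ∀ k, n₀ ≤ k → u (k + p) = Λ * u k) :
    ∃ S, ∀ n, ∑ k ∈ Finset.range n, (u k)⁻¹ ≤ S := by
  set B₀ := ∑ k ∈ Finset.range n₀, (u k)⁻¹
  set B₁ := ∑ r ∈ Finset.range p, (u (n₀ + r))⁻¹
  have hblock : ∀ j r, (u (n₀ + j * p + r))⁻¹ = (u (n₀ + r))⁻¹ * Λ⁻¹ ^ j := by
    intro j r
    induction j with
    | zero => simp
    | succ j ih =>
      rw [show n₀ + (j + 1) * p + r = n₀ + j * p + r + p by ring, hgrowth _ (by omega), mul_inv,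
        ih, pow_succ]
      ring
  have hsum : ∀ j, ∑ k ∈ Finset.range (n₀ + j * p), (u k)⁻¹
      = B₀ + B₁ * ∑ i ∈ Finset.range j, Λ⁻¹ ^ i := by
    intro j
    induction j with
    | zero => simp [B₀]
    | succ j ih =>
      rw [show n₀ + (j + 1) * p = n₀ + j * p + p by ring, Finset.sum_range_add, ih,
        Finset.sum_range_succ, mul_add, Finset.sum_congr rfl fun r _ => hblock j r,
        ← Finset.sum_mul]
      ring
  have hB₁ : 0 ≤ B₁ := Finset.sum_nonneg fun r _ => (inv_pos.mpr (hu _)).le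
  refine ⟨B₀ + B₁ / (1 - Λ⁻¹), fun n => ?_⟩
  calc ∑ k ∈ Finset.range n, (u k)⁻¹
      ≤ ∑ k ∈ Finset.range (n₀ + n * p), (u k)⁻¹ :=
        Finset.sum_le_sum_of_subset_of_nonneg
          (Finset.range_subset_range.mpr (by nlinarith)) fun k _ _ => (inv_pos.mpr (hu k)).le
    _ = B₀ + B₁ * ∑ i ∈ Finset.range n, Λ⁻¹ ^ i := hsum n
    _ ≤ B₀ + B₁ / (1 - Λ⁻¹) := by
        rw [div_eq_mul_one_div, Finset.range_eq_Ico]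
        gcongr
        simpa using geom_sum_Ico_le_of_lt_one (m := 0) (by positivity) (inv_lt_one_of_one_lt₀ hΛ)

lemma mul_one_sub_sum_le {r ε : ℕ → ℝ} {n : ℕ} (hr₀ : 0 ≤ r 0)
    (hε : ∀ k < n, 0 ≤ ε k ∧ ε k ≤ 1) (hstep : ∀ k < n, r k * (1 - ε k) ≤ r (k + 1)) :
    r 0 * (1 - ∑ k ∈ Finset.range n, ε k) ≤ r n := by
  induction n with
  | zero => simp
  | succ n ih =>
    have ih := ih (fun k hk => hε k (by omega)) fun k hk => hstep k (by omega)
    obtain ⟨h₀, h₁⟩ := hε n (by omega)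
    have hE : 0 ≤ ∑ k ∈ Finset.range n, ε k :=
      Finset.sum_nonneg fun k hk => (hε k ((Finset.mem_range.mp hk).trans n.lt_succ_self)).1
    rw [Finset.sum_range_succ]
    calc r 0 * (1 - (∑ k ∈ Finset.range n, ε k + ε n))
        ≤ r 0 * (1 - ∑ k ∈ Finset.range n, ε k) * (1 - ε n) := by
          nlinarith [mul_nonneg (mul_nonneg hr₀ hE) h₀]
      _ ≤ r n * (1 - ε n) := mul_le_mul_of_nonneg_right ih (by linarith)
      _ ≤ r (n + 1) := hstep n (by omega)

lemma le_add_sum_mul_exp_sum {r ε β : ℕ → ℝ} {n : ℕ} (hr₀ : 0 ≤ r 0) (hε : ∀ k, 0 ≤ ε k)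
    (hβ : ∀ k, 0 ≤ β k) (hstep : ∀ k < n, r (k + 1) ≤ r k * (1 + ε k) + β k) :
    r n ≤ (r 0 + ∑ k ∈ Finset.range n, β k) * Real.exp (∑ k ∈ Finset.range n, ε k) := by
  induction n with
  | zero => simp
  | succ n ih =>
    have ih := ih fun k hk => hstep k (by omega)
    set B := ∑ k ∈ Finset.range n, β k
    set E := ∑ k ∈ Finset.range n, ε k
    have hB : 0 ≤ B := Finset.sum_nonneg fun k _ => hβ k
    have hE : 0 ≤ E := Finset.sum_nonneg fun k _ => hε k
    have h₁ : r n * (1 + ε n) ≤ (r 0 + B) * Real.exp E * Real.exp (ε n) :=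
      (mul_le_mul_of_nonneg_right ih (by linarith [hε n])).trans
        (mul_le_mul_of_nonneg_left (by linarith [Real.add_one_le_exp (ε n)]) (by positivity))
    have h₂ : β n ≤ β n * (Real.exp E * Real.exp (ε n)) :=
      le_mul_of_one_le_right (hβ n) (one_le_mul_of_one_le_of_one_le (Real.one_le_exp hE)
        (Real.one_le_exp (hε n)))
    rw [Finset.sum_range_succ, Finset.sum_range_succ, Real.exp_add]
    linarith [hstep n (by omega)]

section QuadraticFamily

variable {a : ℝ} {F : ℝ → ℝ}

lemma contDiff_qm (a : ℝ) : ContDiff ℝ ∞ (qm a) := by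
  unfold qm; fun_prop

lemma contDiff_iterate_qm (a : ℝ) (n : ℕ) : ContDiff ℝ ∞ (qm a)^[n] := by
  induction n with
  | zero => exact contDiff_id
  | succ n ih => rw [Function.iterate_succ]; exact ih.comp (contDiff_qm a)

lemma hasDerivAt_qm (a x : ℝ) : HasDerivAt (qm a) (-2 * x) x := by
  show HasDerivAt (fun y => a - y ^ 2) _ x
  simpa using (hasDerivAt_pow 2 x).const_sub a

lemma hasDerivAt_comp_qm {F' x : ℝ} (hF : HasDerivAt F F' (qm a x)) :
    HasDerivAt (fun y => F (qm a y)) (F' * (-2 * x)) x :=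
  hF.comp x (hasDerivAt_qm a x)

lemma deriv_comp_qm (hF : Differentiable ℝ F) (x : ℝ) :
    deriv (F ∘ qm a) x = deriv F (qm a x) * (-2 * x) :=
  (hasDerivAt_comp_qm (hF _).hasDerivAt).deriv

lemma deriv_deriv_comp_qm (hF : ContDiff ℝ ∞ F) (x : ℝ) :
    deriv (deriv (F ∘ qm a)) x =
      deriv (deriv F) (qm a x) * (4 * x ^ 2) - 2 * deriv F (qm a x) := by
  have hF₁ : Differentiable ℝ (deriv F) := (hF.iterate_deriv 1).differentiable (by simp)
  rw [show deriv (F ∘ qm a) = fun y => deriv F (qm a y) * (-2 * y) from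
    funext (deriv_comp_qm (hF.differentiable (by simp)))]
  rw [((hasDerivAt_comp_qm (hF₁ _).hasDerivAt).fun_mul ((hasDerivAt_id' x).const_mul (-2))).deriv]
  ring

lemma deriv_deriv_deriv_comp_qm (hF : ContDiff ℝ ∞ F) (x : ℝ) :
    deriv (deriv (deriv (F ∘ qm a))) x =
      deriv (deriv (deriv F)) (qm a x) * (-8 * x ^ 3) + 12 * x * deriv (deriv F) (qm a x) := by
  have hF₁ : Differentiable ℝ (deriv F) := (hF.iterate_deriv 1).differentiable (by simp)
  have hF₂ : Differentiable ℝ (deriv (deriv F)) := (hF.iterate_deriv 2).differentiable (by simp)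
  rw [show deriv (deriv (F ∘ qm a)) = fun y =>
      deriv (deriv F) (qm a y) * (4 * y ^ 2) - 2 * deriv F (qm a y) from
    funext (deriv_deriv_comp_qm hF)]
  rw [(((hasDerivAt_comp_qm (hF₂ _).hasDerivAt).fun_mul ((hasDerivAt_pow 2 x).const_mul 4)).fun_sub
    ((hasDerivAt_comp_qm (hF₁ _).hasDerivAt).const_mul 2)).deriv]
  ring

lemma schwarzian_comp_qm (hF : ContDiff ℝ ∞ F) {x : ℝ} (hx : x ≠ 0)
    (hF' : deriv F (qm a x) ≠ 0) :
    schwarzian (F ∘ qm a) x = 4 * x ^ 2 * schwarzian F (qm a x) - 3 / (2 * x ^ 2) := by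
  rw [schwarzian, schwarzian, deriv_comp_qm (hF.differentiable (by simp)),
    deriv_deriv_comp_qm hF, deriv_deriv_deriv_comp_qm hF]
  field_simp
  ring

lemma schwarzian_comp_qm_neg (hF : ContDiff ℝ ∞ F) {x : ℝ} (hx : deriv (F ∘ qm a) x ≠ 0)
    (hSF : deriv F (qm a x) ≠ 0 → schwarzian F (qm a x) ≤ 0) :
    schwarzian (F ∘ qm a) x < 0 := by
  rw [deriv_comp_qm (hF.differentiable (by simp))] at hx
  obtain ⟨hF', hx'⟩ := mul_ne_zero_iff.mp hx
  have hx₀ : x ≠ 0 := right_ne_zero_of_mul hx'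
  rw [schwarzian_comp_qm hF hx₀ hF']
  have := hSF hF'
  have : 0 < 3 / (2 * x ^ 2) := by positivity
  nlinarith [sq_nonneg x]

lemma schwarzian_iterate_qm_nonpos (n : ℕ) {x : ℝ} (hx : deriv (qm a)^[n] x ≠ 0) :
    schwarzian (qm a)^[n] x ≤ 0 := by
  induction n generalizing x with
  | zero => simp [schwarzian]
  | succ n ih =>
    rw [Function.iterate_succ] at hx ⊢
    exact (schwarzian_comp_qm_neg (contDiff_iterate_qm a n) hx ih).le

lemma hasNegSchwarzian_iterate_qm {n : ℕ} (hn : n ≠ 0) : HasNegSchwarzian (qm a)^[n] := by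
  intro x hx
  obtain ⟨k, rfl⟩ := Nat.exists_eq_succ_of_ne_zero hn
  rw [Function.iterate_succ] at hx ⊢
  exact schwarzian_comp_qm_neg (contDiff_iterate_qm a k) hx (schwarzian_iterate_qm_nonpos k)

lemma deriv_iterate_qm (n : ℕ) (x : ℝ) :
    deriv (qm a)^[n] x = ∏ i ∈ Finset.range n, -2 * (qm a)^[i] x := by
  induction n generalizing x with
  | zero => simp
  | succ n ih =>
    rw [Function.iterate_succ, deriv_comp_qm ((contDiff_iterate_qm a n).differentiable (by simp)),
      ih, Finset.prod_range_succ']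
    simp only [← Function.iterate_succ_apply, Function.iterate_zero, id]

lemma deriv_iterate_qm_eq_zero_iff {n : ℕ} {x : ℝ} :
    deriv (qm a)^[n] x = 0 ↔ ∃ i < n, (qm a)^[i] x = 0 := by
  simp [deriv_iterate_qm, Finset.prod_eq_zero_iff]

lemma deriv_iterate_qm_add (m n : ℕ) (x : ℝ) :
    deriv (qm a)^[m + n] x = deriv (qm a)^[m] ((qm a)^[n] x) * deriv (qm a)^[n] x := by
  rw [Function.iterate_add]
  exact deriv_comp x ((contDiff_iterate_qm a m).differentiable (by simp) _)
    ((contDiff_iterate_qm a n).differentiable (by simp) _)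

lemma qm_lt_neg_two (ha : a < 2) {x : ℝ} (hx : 2 ≤ |x|) : qm a x < -2 := by
  have : 4 ≤ x ^ 2 := by nlinarith [sq_abs x, abs_nonneg x]
  simp only [qm]
  linarith

lemma iterate_qm_lt_neg_two (ha : a < 2) {n : ℕ} (hn : n ≠ 0) {x : ℝ} (hx : 2 ≤ |x|) :
    (qm a)^[n] x < -2 := by
  induction n with
  | zero => exact absurd rfl hn
  | succ n ih =>
    rw [Function.iterate_succ_apply']
    rcases Nat.eq_zero_or_pos n with rfl | hn'
    · exact qm_lt_neg_two ha hx
    · have := ih hn'.ne'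
      exact qm_lt_neg_two ha (by rw [abs_of_neg (by linarith)]; linarith)

lemma abs_iterate_qm_zero_le (ha₀ : 0 ≤ a) (ha₂ : a ≤ 2) (n : ℕ) : |(qm a)^[n] 0| ≤ a := by
  induction n with
  | zero => simpa
  | succ n ih =>
    rw [Function.iterate_succ_apply']
    have := sq_abs ((qm a)^[n] 0)
    have : |(qm a)^[n] 0| ^ 2 ≤ a ^ 2 := pow_le_pow_left₀ (abs_nonneg _) ih 2
    rw [abs_le]
    simp only [qm]
    constructor <;> nlinarith

lemma deriv_iterate_qm_ne_zero_of_mapsTo {m p : ℕ} (hp : 0 < p)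
    (hper : IsPeriodicPt (qm a) p ((qm a)^[m] 0)) {S : Set ℝ} (hS : MapsTo (qm a)^[p] S S)
    (hfix : ∀ x ∈ S, (qm a)^[p] x ≠ x) : ∀ x ∈ S, deriv (qm a)^[p] x ≠ 0 := by
  -- A critical point of `f^p` is a preimage of `0`, so its orbit under `f^p` stays in `S` and
  -- reaches the cycle of `0`, whose points are fixed by `f^p`.
  intro x hx h₀
  obtain ⟨i, hi, hxi⟩ := deriv_iterate_qm_eq_zero_iff.mp h₀
  have hmem := hS.iterate (m + 1) hx
  have hk : p * (m + 1) = (p * (m + 1) - i - m) + m + i := by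
    have : m ≤ p * m := Nat.le_mul_of_pos_left m hp
    rw [mul_add_one] at *
    omega
  rw [← Function.iterate_mul, hk, Function.iterate_add_apply, Function.iterate_add_apply,
    hxi] at hmem
  exact hfix _ hmem (hper.apply_iterate _).eq

theorem one_lt_abs_deriv_iterate_qm (ha₀ : 0 ≤ a) (ha₂ : a < 2) {m p : ℕ} (hp : 0 < p)
    (hper : IsPeriodicPt (qm a) p ((qm a)^[m] 0)) (hne : ∀ i, (qm a)^[i] ((qm a)^[m] 0) ≠ 0) :
    1 < |deriv (qm a)^[p] ((qm a)^[m] 0)| := by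
  set q := (qm a)^[m] 0
  have hper₂ := hper.mul_const 2
  have hμ : deriv (qm a)^[p * 2] q = deriv (qm a)^[p] q ^ 2 := by
    rw [mul_two, deriv_iterate_qm_add, hper.eq, sq]
  have hne₀ : deriv (qm a)^[p] q ≠ 0 := fun h => by
    obtain ⟨i, -, hi⟩ := deriv_iterate_qm_eq_zero_iff.mp h
    exact hne i hi
  have hq : |q| < 2 := (abs_iterate_qm_zero_le ha₀ ha₂.le m).trans_lt ha₂
  have hesc : ∀ x : ℝ, 2 ≤ |x| → (qm a)^[p * 2] x < -2 := fun x hx =>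
    iterate_qm_lt_neg_two ha₂ (by omega) hx
  -- `f^{2p}` has the positive multiplier `(f^p)'(q)²` at `q`, and `±2` escape to `-∞` under it.
  have := one_lt_deriv_of_isFixedPt (contDiff_iterate_qm a (p * 2))
    (hasNegSchwarzian_iterate_qm (by omega))
    (fun S hS hfix => deriv_iterate_qm_ne_zero_of_mapsTo (by omega) hper₂ hS hfix) hper₂.eq
    (by rw [hμ]; positivity) (z₁ := -2) (by linarith [abs_lt.mp hq]) (hesc (-2) (by simp)).le
    (z₂ := 2) (by linarith [abs_lt.mp hq]) (by linarith [hesc 2 (by simp), abs_lt.mp hq])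
  rw [hμ] at this
  exact one_lt_sq_iff_one_lt_abs _ |>.mp this

def critDeriv (a : ℝ) (n : ℕ) : ℝ := |deriv (qm a)^[n] (qm a 0)|

lemma deriv_iterate_qm_apply_iterate {p j : ℕ} {x : ℝ} (hx : IsPeriodicPt (qm a) p x)
    (hj : deriv (qm a)^[j] x ≠ 0) : deriv (qm a)^[p] ((qm a)^[j] x) = deriv (qm a)^[p] x := by
  have h := deriv_iterate_qm_add (a := a) p j x
  rw [add_comm, deriv_iterate_qm_add, hx.eq] at h
  exact mul_right_cancel₀ hj (h.symm.trans (mul_comm _ _))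

lemma critDeriv_pos (hne : ∀ i, 1 ≤ i → (qm a)^[i] 0 ≠ 0) (n : ℕ) : 0 < critDeriv a n := by
  refine abs_pos.mpr fun h => ?_
  obtain ⟨i, -, hi⟩ := deriv_iterate_qm_eq_zero_iff.mp h
  exact hne (i + 1) (by omega) (by rwa [Function.iterate_succ_apply])

lemma critDeriv_succ (n : ℕ) : critDeriv a (n + 1) = 2 * |(qm a)^[n + 1] 0| * critDeriv a n := by
  have h := deriv_iterate_qm_add (a := a) 1 n (qm a 0)
  rw [add_comm 1 n, deriv_iterate_qm 1] at h
  rw [critDeriv, critDeriv, h, Function.iterate_succ_apply]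
  simp [abs_mul]

lemma critDeriv_add_period {m p : ℕ} (hm : 1 ≤ m) (hper : IsPeriodicPt (qm a) p ((qm a)^[m] 0))
    (hne : ∀ i, 1 ≤ i → (qm a)^[i] 0 ≠ 0) {k : ℕ} (hk : m ≤ k + 1) :
    critDeriv a (k + p) = |deriv (qm a)^[p] ((qm a)^[m] 0)| * critDeriv a k := by
  have hcyc : (qm a)^[k] (qm a 0) = (qm a)^[k + 1 - m] ((qm a)^[m] 0) := by
    rw [← Function.iterate_add_apply, ← Function.iterate_succ_apply, Nat.sub_add_cancel hk]
  rw [critDeriv, add_comm, deriv_iterate_qm_add, abs_mul, hcyc,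
    deriv_iterate_qm_apply_iterate hper fun h => ?_, critDeriv]
  obtain ⟨i, -, hi⟩ := deriv_iterate_qm_eq_zero_iff.mp h
  exact hne (i + m) (by omega) (by rwa [Function.iterate_add_apply])

lemma exists_forall_sum_inv_critDeriv_le (ha₀ : 0 ≤ a) (ha₂ : a < 2)
    (hpre : StrictlyPreperiodic a) :
    ∃ S, ∀ n, ∑ k ∈ Finset.range n, (critDeriv a (k + 1))⁻¹ ≤ S := by
  obtain ⟨hne, m, p, hm, hp, hmp⟩ := hpre
  have hper : IsPeriodicPt (qm a) p ((qm a)^[m] 0) := by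
    rw [IsPeriodicPt, Function.IsFixedPt, ← Function.iterate_add_apply, add_comm, hmp]
  have hcyc : ∀ i, (qm a)^[i] ((qm a)^[m] 0) ≠ 0 := fun i h =>
    hne (i + m) (by omega) (by rwa [Function.iterate_add_apply])
  refine exists_forall_sum_inv_le (n₀ := m) (fun k => critDeriv_pos hne (k + 1))
    (one_lt_abs_deriv_iterate_qm ha₀ ha₂ hp hper hcyc) hp fun k hk => ?_
  rw [add_right_comm]
  exact critDeriv_add_period hm hper hne (by omega)

end QuadraticFamily

section ShadowingIntervals

variable {a α ξ₀ : ℝ}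

lemma IEnd_add_le_iterate (hα : 0 ≤ α) (n : ℕ) :
    (IEnd a α n).1 + α ≤ (qm a)^[n + 1] 0 ∧ (qm a)^[n + 1] 0 + α ≤ (IEnd a α n).2 := by
  induction n with
  | zero =>
    simp only [IEnd, zero_add, Function.iterate_one]
    constructor <;> linarith
  | succ n ih =>
    have hmem : (qm a)^[n + 2] 0 ∈ qm a '' Icc (IEnd a α n).1 (IEnd a α n).2 :=
      ⟨_, ⟨by linarith [ih.1], by linarith [ih.2]⟩, (Function.iterate_succ_apply' _ _ _).symm⟩
    have hcpt := (isCompact_Icc (a := (IEnd a α n).1) (b := (IEnd a α n).2)).image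
      (contDiff_qm a).continuous
    simp only [IEnd]
    exact ⟨by linarith [csInf_le hcpt.bddBelow hmem], by linarith [le_csSup hcpt.bddAbove hmem]⟩

lemma two_mul_le_len (hα : 0 ≤ α) (n : ℕ) : 2 * α ≤ len a α n := by
  have := IEnd_add_le_iterate (a := a) hα n
  unfold len
  linarith

lemma sSup_sub_sInf_image_qm {s t : ℝ} (hst : s ≤ t) (h₀ : 0 < s ∨ t < 0) :
    sSup (qm a '' Icc s t) - sInf (qm a '' Icc s t) = |s + t| * (t - s) := by
  have hs := mem_image_of_mem (qm a) (left_mem_Icc.mpr hst)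
  have ht := mem_image_of_mem (qm a) (right_mem_Icc.mpr hst)
  rcases h₀ with h₀ | h₀
  · have hmax : IsGreatest (qm a '' Icc s t) (qm a s) :=
      ⟨hs, by rintro _ ⟨x, hx, rfl⟩; simp only [qm]; nlinarith [hx.1, hx.2]⟩
    have hmin : IsLeast (qm a '' Icc s t) (qm a t) :=
      ⟨ht, by rintro _ ⟨x, hx, rfl⟩; simp only [qm]; nlinarith [hx.1, hx.2]⟩
    rw [hmax.csSup_eq, hmin.csInf_eq, abs_of_pos (by linarith)]
    simp only [qm]
    ring
  · have hmax : IsGreatest (qm a '' Icc s t) (qm a t) :=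
      ⟨ht, by rintro _ ⟨x, hx, rfl⟩; simp only [qm]; nlinarith [hx.1, hx.2]⟩
    have hmin : IsLeast (qm a '' Icc s t) (qm a s) :=
      ⟨hs, by rintro _ ⟨x, hx, rfl⟩; simp only [qm]; nlinarith [hx.1, hx.2]⟩
    rw [hmax.csSup_eq, hmin.csInf_eq, abs_of_neg (by linarith)]
    simp only [qm]
    ring

lemma len_succ (hα : 0 ≤ α) {n : ℕ} (h₀ : 0 < (IEnd a α n).1 ∨ (IEnd a α n).2 < 0) :
    len a α (n + 1) = |(IEnd a α n).1 + (IEnd a α n).2| * len a α n + 2 * α := by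
  have := IEnd_add_le_iterate (a := a) hα n
  have := sSup_sub_sInf_image_qm (a := a) (by linarith : (IEnd a α n).1 ≤ (IEnd a α n).2) h₀
  simp only [len, IEnd] at *
  linarith

def lenRatio (a α : ℝ) (n : ℕ) : ℝ := len a α n / (critDeriv a n * α)

lemma lenRatio_zero (hα : α ≠ 0) : lenRatio a α 0 = 4 := by
  simp only [lenRatio, len, IEnd, add_sub_sub_cancel, critDeriv, Function.iterate_zero, deriv_id',
    abs_one, one_mul]
  field_simp
  ring

lemma lenRatio_succ_bounds (hne : ∀ i, 1 ≤ i → (qm a)^[i] 0 ≠ 0) (hα : 0 < α) {n : ℕ}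
    (hc : 2 * ξ₀ ≤ |(qm a)^[n + 1] 0|) (hL : len a α n < ξ₀) :
    lenRatio a α n * (1 - len a α n / (4 * ξ₀)) ≤ lenRatio a α (n + 1) ∧
      lenRatio a α (n + 1) ≤
        lenRatio a α n * (1 + len a α n / (4 * ξ₀)) + 2 / critDeriv a (n + 1) := by
  obtain ⟨hlo, hhi⟩ := IEnd_add_le_iterate (a := a) hα.le n
  set c := (qm a)^[n + 1] 0
  set L := len a α n
  have hL₀ : 2 * α ≤ L := two_mul_le_len hα.le n
  have hLe : L = (IEnd a α n).2 - (IEnd a α n).1 := rfl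
  have hc₀ : 0 < |c| := by linarith
  have h₀ : 0 < (IEnd a α n).1 ∨ (IEnd a α n).2 < 0 := by
    rcases abs_cases c with ⟨h, -⟩ | ⟨h, -⟩ <;> [left; right] <;> linarith
  set u := |(IEnd a α n).1 + (IEnd a α n).2|
  have hu : |(u - 2 * |c|)| ≤ L := by
    have : |(IEnd a α n).1 + (IEnd a α n).2 - 2 * c| ≤ L := abs_le.mpr ⟨by linarith, by linarith⟩
    refine le_trans ?_ this
    simpa [u, abs_mul] using abs_abs_sub_abs_le_abs_sub ((IEnd a α n).1 + (IEnd a α n).2) (2 * c)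
  have hξ₀ : 0 < 4 * ξ₀ := by linarith
  have hdev : |u / (2 * |c|) - 1| ≤ L / (4 * ξ₀) := by
    rw [show u / (2 * |c|) - 1 = (u - 2 * |c|) / (2 * |c|) by field_simp, abs_div,
      abs_of_pos (show 0 < 2 * |c| by linarith)]
    exact (div_le_div_of_nonneg_right hu (by linarith)).trans
      (div_le_div_of_nonneg_left (by linarith) hξ₀ (by linarith : 4 * ξ₀ ≤ 2 * |c|))
  have hr : lenRatio a α (n + 1) = u / (2 * |c|) * lenRatio a α n + 2 / critDeriv a (n + 1) := by
    have hD := critDeriv_pos hne n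
    have hlen : len a α (n + 1) = u * L + 2 * α := len_succ hα.le h₀
    have hcd : critDeriv a (n + 1) = 2 * |c| * critDeriv a n := critDeriv_succ n
    rw [lenRatio, lenRatio, hlen, hcd]
    field_simp
    rfl
  have hr₀ : 0 ≤ lenRatio a α n :=
    div_nonneg (by linarith) (mul_pos (critDeriv_pos hne n) hα).le
  have hβ : 0 ≤ 2 / critDeriv a (n + 1) := div_nonneg zero_le_two (critDeriv_pos hne _).le
  obtain ⟨hdev₁, hdev₂⟩ := abs_le.mp hdev
  rw [hr]
  constructor <;> nlinarith

lemma Nal_spec (hα : 0 < α) (hξ₀ : 0 ≤ ξ₀) :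
    (∀ k < Nal a ξ₀ α, len a α k < ξ₀) ∧ ∑ k ∈ Finset.range (Nal a ξ₀ α), len a α k ≤ ξ₀ := by
  have hmem : Nal a ξ₀ α ∈ {N : ℕ | (∀ n : ℕ, 1 ≤ n → n ≤ N → len a α (n - 1) < ξ₀) ∧
      ∑ n ∈ Finset.range N, len a α n ≤ ξ₀} := by
    refine Nat.sSup_mem ⟨0, fun n h₁ h₂ => by omega, by simp [hξ₀]⟩
      ⟨⌈ξ₀ / (2 * α)⌉₊, fun N hN => ?_⟩
    have : (N : ℝ) * (2 * α) ≤ ξ₀ :=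
      calc (N : ℝ) * (2 * α) = ∑ _k ∈ Finset.range N, 2 * α := by simp
        _ ≤ ∑ k ∈ Finset.range N, len a α k :=
          Finset.sum_le_sum fun k _ => two_mul_le_len hα.le k
        _ ≤ ξ₀ := hN.2
    exact_mod_cast ((le_div_iff₀ (by positivity)).mpr this).trans (Nat.le_ceil _)
  exact ⟨fun k hk => by simpa using hmem.1 (k + 1) (by omega) hk, hmem.2⟩

lemma lenRatio_bounds (hne : ∀ i, 1 ≤ i → (qm a)^[i] 0 ≠ 0)
    (hcrit : ∀ i, 1 ≤ i → 2 * ξ₀ ≤ |(qm a)^[i] 0|) (hα : 0 < α) (hαξ : α ≤ ξ₀) {n : ℕ}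
    (hn : n ≤ Nal a ξ₀ α) :
    3 ≤ lenRatio a α n ∧
      lenRatio a α n ≤
        (4 + 2 * ∑ k ∈ Finset.range n, (critDeriv a (k + 1))⁻¹) * Real.exp (1 / 4) := by
  obtain ⟨hlt, hsum⟩ := Nal_spec (a := a) hα (by linarith)
  have hξ₀ : 0 < ξ₀ := hα.trans_le hαξ
  have hlen : ∀ k, 0 ≤ len a α k := fun k => by linarith [two_mul_le_len (a := a) hα.le k]
  have hE : ∑ k ∈ Finset.range n, len a α k / (4 * ξ₀) ≤ 1 / 4 := by
    rw [← Finset.sum_div, div_le_iff₀ (by positivity)]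
    have := (Finset.sum_le_sum_of_subset_of_nonneg (Finset.range_subset_range.mpr hn)
      fun k _ _ => hlen k).trans hsum
    linarith
  have hstep := fun k (hk : k < n) =>
    lenRatio_succ_bounds hne hα (hcrit (k + 1) (by omega)) (hlt k (by omega))
  constructor
  · have := mul_one_sub_sum_le (n := n) (r := lenRatio a α) (by rw [lenRatio_zero hα.ne']; norm_num)
      (fun k hk => ⟨by have := hlen k; positivity, by
        rw [div_le_one (by positivity)]; linarith [hlt k (by omega)]⟩) fun k hk => (hstep k hk).1
    rw [lenRatio_zero hα.ne'] at this
    linarith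
  · have := le_add_sum_mul_exp_sum (n := n) (r := lenRatio a α)
      (by rw [lenRatio_zero hα.ne']; norm_num)
      (fun k => by have := hlen k; positivity)
      (fun k => div_nonneg zero_le_two (critDeriv_pos hne (k + 1)).le) fun k hk => (hstep k hk).2
    have hβ : ∑ k ∈ Finset.range n, 2 / critDeriv a (k + 1)
        = 2 * ∑ k ∈ Finset.range n, (critDeriv a (k + 1))⁻¹ := by
      rw [Finset.mul_sum]
      simp only [div_eq_mul_inv]
    have hS : 0 ≤ ∑ k ∈ Finset.range n, (critDeriv a (k + 1))⁻¹ :=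
      Finset.sum_nonneg fun k _ => inv_nonneg.mpr (critDeriv_pos hne (k + 1)).le
    rw [lenRatio_zero hα.ne', hβ] at this
    exact this.trans (mul_le_mul_of_nonneg_left (Real.exp_le_exp.mpr hE) (by linarith))

end ShadowingIntervals

theorem shadowing_interval_length_general
    (a : ℝ) (ha : a ∈ Set.Ioo (1 : ℝ) 2) (hpre : StrictlyPreperiodic a)
    (ξ₀ : ℝ)
    (hcrit : ∀ i : ℕ, 1 ≤ i → (qm a)^[i] 0 ∉ Set.Ioo (-(2 * ξ₀)) (2 * ξ₀))
    :
    ∃ C : ℝ, 1 ≤ C ∧ ∀ α : ℝ, 0 < α → α ≤ ξ₀ → ∀ n : ℕ, n ≤ Nal a ξ₀ α →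
      C⁻¹ * (|deriv ((qm a)^[n]) (qm a 0)| * α) ≤ len a α n ∧
      len a α n ≤ C * (|deriv ((qm a)^[n]) (qm a 0)| * α) := by
  obtain ⟨S, hS⟩ := exists_forall_sum_inv_critDeriv_le (by linarith [ha.1]) ha.2 hpre
  have hS₀ : 0 ≤ S := by simpa using hS 0
  have hcrit' : ∀ i, 1 ≤ i → 2 * ξ₀ ≤ |(qm a)^[i] 0| := fun i hi =>
    not_lt.mp fun h => hcrit i hi (abs_lt.mp h)
  set C := (4 + 2 * S) * Real.exp (1 / 4)
  have hC : 1 ≤ C := one_le_mul_of_one_le_of_one_le (by linarith) (Real.one_le_exp (by norm_num))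
  refine ⟨C, hC, fun α hα hαξ n hn => ?_⟩
  obtain ⟨hlo, hhi⟩ := lenRatio_bounds hpre.1 hcrit' hα hαξ hn
  have hD : 0 < critDeriv a n * α := mul_pos (critDeriv_pos hpre.1 n) hα
  rw [lenRatio, le_div_iff₀ hD] at hlo
  rw [lenRatio, div_le_iff₀ hD] at hhi
  refine ⟨?_, hhi.trans (mul_le_mul_of_nonneg_right ?_ hD.le)⟩
  · calc C⁻¹ * (critDeriv a n * α) ≤ 1 * (critDeriv a n * α) :=
          mul_le_mul_of_nonneg_right (inv_le_one_of_one_le₀ hC) hD.le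
      _ ≤ len a α n := by linarith
  · exact mul_le_mul_of_nonneg_right (by linarith [hS n]) (Real.exp_pos _).le

/-- There is `C ≥ 1`, depending only on `f` and `ξ₀`, such that for every
`α ∈ (0, ξ₀]` and every `0 ≤ n ≤ N(α)`:
`C⁻¹ |(f^n)'(c₁)| α ≤ |I_{n+1}| ≤ C |(f^n)'(c₁)| α`. -/
theorem shadowing_interval_length
    (a : ℝ) (ha : a ∈ Set.Ioo (1 : ℝ) 2) (hpre : StrictlyPreperiodic a)
    (ξ₀ : ℝ) (hξ₀ : 0 < ξ₀)
    (hcrit : ∀ i : ℕ, 1 ≤ i → (qm a)^[i] 0 ∉ Set.Ioo (-(2 * ξ₀)) (2 * ξ₀))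
    :
    ∃ C : ℝ, 1 ≤ C ∧ ∀ α : ℝ, 0 < α → α ≤ ξ₀ → ∀ n : ℕ, n ≤ Nal a ξ₀ α →
      C⁻¹ * (|deriv ((qm a)^[n]) (qm a 0)| * α) ≤ len a α n ∧
      len a α n ≤ C * (|deriv ((qm a)^[n]) (qm a 0)| * α) :=
  shadowing_interval_length_general a ha hpre ξ₀ hcrit
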